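/- Every rule of the LBF tableau system preserves both cleanliness and satisfiability over increasing domain models: if the formula set at the premise node of a rule application is clean (respectively, satisfiable at some world of some increasing domain model under some relevant assignment), then so is the formula set at (each of, or in the case of (∨) at least one of) the conclusion node(s). In particular, for the (∀) rule: if M,w,π ⊨ ∀yφ ∧ ⋀Γ with Γ Existential-safe, then the set Γ ∪ {φ*[z/y] : z ∈ Dom(σ)} of clean rewritings is satisfiable; and for the (∃) rule: if M,w,π ⊨ ∃xφ ∧ ⋀Γ with Γ clean, then Γ ∪ {φ} is satisfiable. -/

import Mathlib

set_option maxHeartbeats 1000000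

/-! ## Syntax of first-order modal logic (FOML)

Predicate symbols and variables are represented by natural numbers; an atom
`atom p args` applies the predicate symbol `p` to the list of variables `args`
(the arity of `p` in this occurrence is the length of `args`). -/
inductive Formula : Type where
  | atom (p : ℕ) (args : List ℕ)
  | neg  (φ : Formula)
  | and  (φ ψ : Formula)
  | or   (φ ψ : Formula)
  | box  (φ : Formula)
  | dia  (φ : Formula)
  | ex   (x : ℕ) (φ : Formula)
  | all  (x : ℕ) (φ : Formula)
deriving DecidableEq

namespace Formula

def imp (φ ψ : Formula) : Formula := .or φ.neg ψ
def biimp (φ ψ : Formula) : Formula := .and (imp φ ψ) (imp ψ φ)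
/-- a fixed tautology `⊤` -/
def top : Formula := .or (.atom 0 []) (.neg (.atom 0 []))
/-- a fixed contradiction `⊥` -/
def bot : Formula := .and (.atom 0 []) (.neg (.atom 0 []))

end Formula

def bigAnd (l : List Formula) : Formula := l.foldr Formula.and Formula.top
def bigOr  (l : List Formula) : Formula := l.foldr Formula.or Formula.bot

/-! ## Semantics: Kripke structures with world-relative domains -/

structure Model where
  W : Type
  D : Type
  R : W → W → Prop
  dom : W → Set D
  ρ : W → ℕ → Set (List D)

/-- `M` is an increasing domain model: nonempty countable set of worlds, nonempty
countable domain, nonempty local domains that increase along the accessibility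
relation, and interpretations of predicates at a world take values in the local
domain of that world. -/
def Model.Increasing (M : Model) : Prop :=
  Nonempty M.W ∧ Nonempty M.D ∧ Countable M.W ∧ Countable M.D ∧
    (∀ w, (M.dom w).Nonempty) ∧
    (∀ w v, M.R w v → M.dom w ⊆ M.dom v) ∧
    (∀ w p l, l ∈ M.ρ w p → ∀ d ∈ l, d ∈ M.dom w)

def Model.sat (M : Model) : M.W → (ℕ → M.D) → Formula → Prop
  | w, σ, .atom p args => args.map σ ∈ M.ρ w p
  | w, σ, .neg φ => ¬ M.sat w σ φ
  | w, σ, .and φ ψ => M.sat w σ φ ∧ M.sat w σ ψ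
  | w, σ, .or φ ψ => M.sat w σ φ ∨ M.sat w σ ψ
  | w, σ, .box φ => ∀ v, M.R w v → M.sat v σ φ
  | w, σ, .dia φ => ∃ v, M.R w v ∧ M.sat v σ φ
  | w, σ, .ex x φ => ∃ d ∈ M.dom w, M.sat w (Function.update σ x d) φ
  | w, σ, .all x φ => ∀ d ∈ M.dom w, M.sat w (Function.update σ x d) φ

/-- the assignment `σ` is relevant at the world `w` -/
def Model.relevant (M : Model) (w : M.W) (σ : ℕ → M.D) : Prop := ∀ x, σ x ∈ M.dom w

/-- satisfiability over increasing domain models -/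
def Satisfiable (φ : Formula) : Prop :=
  ∃ (M : Model), M.Increasing ∧ ∃ (w : M.W) (σ : ℕ → M.D), M.relevant w σ ∧ M.sat w σ φ
/-! ## Free and bound variables, cleanliness, substitution, α-equivalence -/

namespace Formula

def fv : Formula → Finset ℕ
  | .atom _ args => args.toFinset
  | .neg φ => φ.fv
  | .and φ ψ => φ.fv ∪ ψ.fv
  | .or φ ψ => φ.fv ∪ ψ.fv
  | .box φ => φ.fv
  | .dia φ => φ.fv
  | .ex x φ => φ.fv.erase x
  | .all x φ => φ.fv.erase x

def bv : Formula → Finset ℕ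
  | .atom _ _ => ∅
  | .neg φ => φ.bv
  | .and φ ψ => φ.bv ∪ ψ.bv
  | .or φ ψ => φ.bv ∪ ψ.bv
  | .box φ => φ.bv
  | .dia φ => φ.bv
  | .ex x φ => insert x φ.bv
  | .all x φ => insert x φ.bv

/-- every use of a quantifier in the formula quantifies a distinct variable -/
def uniqueBinders : Formula → Prop
  | .atom _ _ => True
  | .neg φ => φ.uniqueBinders
  | .and φ ψ => φ.uniqueBinders ∧ ψ.uniqueBinders ∧ Disjoint φ.bv ψ.bv
  | .or φ ψ => φ.uniqueBinders ∧ ψ.uniqueBinders ∧ Disjoint φ.bv ψ.bv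
  | .box φ => φ.uniqueBinders
  | .dia φ => φ.uniqueBinders
  | .ex x φ => φ.uniqueBinders ∧ x ∉ φ.bv
  | .all x φ => φ.uniqueBinders ∧ x ∉ φ.bv

/-- a formula is clean if no variable occurs both bound and free in it and
every use of a quantifier quantifies a distinct variable -/
def Clean (φ : Formula) : Prop := φ.uniqueBinders ∧ Disjoint φ.fv φ.bv

/-- `φ.subst y z` is `φ[z/y]`: replace every free occurrence of `y` by `z` -/
def subst (y z : ℕ) : Formula → Formula
  | .atom p args => .atom p (args.map fun v => if v = y then z else v)
  | .neg φ => .neg (φ.subst y z)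
  | .and φ ψ => .and (φ.subst y z) (ψ.subst y z)
  | .or φ ψ => .or (φ.subst y z) (ψ.subst y z)
  | .box φ => .box (φ.subst y z)
  | .dia φ => .dia (φ.subst y z)
  | .ex x φ => if x = y then .ex x φ else .ex x (φ.subst y z)
  | .all x φ => if x = y then .all x φ else .all x (φ.subst y z)

def isLiteralB : Formula → Bool
  | .atom _ _ => true
  | .neg (.atom _ _) => true
  | _ => false

/-- a module is a literal, a `□`-formula, or a `◇`-formula -/
def isModuleB : Formula → Bool
  | .box _ => true
  | .dia _ => true
  | φ => φ.isLiteralB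

/-- the component set `C(φ)` of a formula -/
def comps : Formula → Finset Formula
  | .and φ ψ => φ.comps ∪ ψ.comps
  | .or φ ψ => φ.comps ∪ ψ.comps
  | .ex x φ => insert (.ex x φ) φ.comps
  | .all x φ => insert (.all x φ) φ.comps
  | φ => {φ}

end Formula

/-- α-equivalence (renaming of bound variables) -/
inductive AlphaEq : Formula → Formula → Prop where
  | atom (p : ℕ) (args : List ℕ) : AlphaEq (.atom p args) (.atom p args)
  | neg {φ φ'} : AlphaEq φ φ' → AlphaEq (.neg φ) (.neg φ')
  | and {φ φ' ψ ψ'} : AlphaEq φ φ' → AlphaEq ψ ψ' → AlphaEq (.and φ ψ) (.and φ' ψ')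
  | or {φ φ' ψ ψ'} : AlphaEq φ φ' → AlphaEq ψ ψ' → AlphaEq (.or φ ψ) (.or φ' ψ')
  | box {φ φ'} : AlphaEq φ φ' → AlphaEq (.box φ) (.box φ')
  | dia {φ φ'} : AlphaEq φ φ' → AlphaEq (.dia φ) (.dia φ')
  | ex {x x' : ℕ} {φ φ'}
      (h : ∀ z, z ∉ φ.bv ∪ φ'.bv → AlphaEq (φ.subst x z) (φ'.subst x' z)) :
      AlphaEq (.ex x φ) (.ex x' φ')
  | all {x x' : ℕ} {φ φ'}
      (h : ∀ z, z ∉ φ.bv ∪ φ'.bv → AlphaEq (φ.subst x z) (φ'.subst x' z)) :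
      AlphaEq (.all x φ) (.all x' φ')

/-- a finite set of formulas is clean if the conjunction of its members is clean -/
def CleanSet (Γ : Finset Formula) : Prop :=
  (∀ φ ∈ Γ, φ.uniqueBinders) ∧
    Disjoint (Γ.sup Formula.fv) (Γ.sup Formula.bv) ∧
    (∀ φ ∈ Γ, ∀ ψ ∈ Γ, φ ≠ ψ → Disjoint φ.bv ψ.bv)

/-- `Γ` is Existential-safe: every component of every formula of `Γ` is a module
or universally quantified -/
def ExSafe (Γ : Finset Formula) : Prop :=
  ∀ φ ∈ Γ, ∀ β ∈ φ.comps, β.isModuleB = true ∨ ∃ (x : ℕ) (γ : Formula), β = .all x γ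
/-! ## Tableau nodes and the LBF tableau rules -/

/-- a tableau node `(w : Γ, σ)`: a world name (a sequence of symbols), a finite
set of formulas, and a partial identity assignment represented by its domain -/
structure Node where
  name : List ℕ
  Γ : Finset Formula
  σ : Finset ℕ

/-- the bodies of the `◇`-formulas of `Γ` (listed in some fixed order) -/
noncomputable def diaBodies (Γ : Finset Formula) : List Formula :=
  Γ.toList.filterMap fun φ => match φ with | .dia ψ => some ψ | _ => none

/-- the bodies of the `□`-formulas of `Γ` -/
noncomputable def boxBodies (Γ : Finset Formula) : Finset Formula :=
  (Γ.toList.filterMap fun φ => match φ with | .box ψ => some ψ | _ => none).toFinset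

/-- `Step n cs` : the tableau rule relation; from the premise node `n` one rule
application produces the conclusion nodes `cs` (for the branching rule `(∨)` a
non-deterministic choice of one branch is made). -/
inductive Step : Node → List Node → Prop where
  | and {w Γ σ} {φ ψ : Formula} (h : Formula.and φ ψ ∈ Γ) :
      Step ⟨w, Γ, σ⟩ [⟨w, insert φ (insert ψ (Γ.erase (.and φ ψ))), σ⟩]
  | orL {w Γ σ} {φ ψ : Formula} (h : Formula.or φ ψ ∈ Γ) :
      Step ⟨w, Γ, σ⟩ [⟨w, insert φ (Γ.erase (.or φ ψ)), σ⟩]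
  | orR {w Γ σ} {φ ψ : Formula} (h : Formula.or φ ψ ∈ Γ) :
      Step ⟨w, Γ, σ⟩ [⟨w, insert ψ (Γ.erase (.or φ ψ)), σ⟩]
  | exis {w Γ σ} {x : ℕ} {φ : Formula} (h : Formula.ex x φ ∈ Γ) :
      Step ⟨w, Γ, σ⟩ [⟨w, insert φ (Γ.erase (.ex x φ)), insert x σ⟩]
  | alls {w Γ σ} {y : ℕ} {φ : Formula} (f : ℕ → Formula)
      (h : Formula.all y φ ∈ Γ)
      (hsafe : ExSafe (Γ.erase (.all y φ)))
      (hα : ∀ z ∈ σ, AlphaEq (f z) (φ.subst y z))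
      (hclean : CleanSet ((Γ.erase (.all y φ)) ∪ σ.image f))
      (hσ : ∀ v ∈ σ, v ∉ ((Γ.erase (.all y φ)) ∪ σ.image f).sup Formula.bv) :
      Step ⟨w, Γ, σ⟩ [⟨w, (Γ.erase (.all y φ)) ∪ σ.image f, σ⟩]
  | diam {w Γ σ} (hmod : ∀ φ ∈ Γ, φ.isModuleB = true) (hne : diaBodies Γ ≠ []) :
      Step ⟨w, Γ, σ⟩
        ((diaBodies Γ).zipIdx.map fun p => ⟨w ++ [p.2], insert p.1 (boxBodies Γ), σ⟩)
  | fin {w Γ σ} (hmod : ∀ φ ∈ Γ, φ.isModuleB = true) (hnd : diaBodies Γ = [])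
      (hbox : boxBodies Γ ≠ ∅) :
      Step ⟨w, Γ, σ⟩ [⟨w, Γ.filter (fun φ => φ.isLiteralB = true), σ⟩]

/-! ## Tableaux as finitely branching trees -/

inductive Tab : Type where
  | mk (n : Node) (k : ℕ) (children : Fin k → Tab)

def Tab.label : Tab → Node
  | .mk n _ _ => n

def Tab.isLeaf : Tab → Prop
  | .mk _ k _ => k = 0

/-- a well-formed tableau: the children of every internal node are obtained
from its label by one application of a tableau rule -/
def Tab.WF : Tab → Prop
  | .mk _ 0 _ => True
  | .mk n (k + 1) cs =>
      Step n ((List.ofFn cs).map Tab.label) ∧ ∀ i, (cs i).WF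

/-- `Subtree t s` : `s` is a subtree of `t` -/
inductive Subtree : Tab → Tab → Prop where
  | refl (t : Tab) : Subtree t t
  | child {n k} {cs : Fin k → Tab} {s : Tab} (i : Fin k) (h : Subtree (cs i) s) :
      Subtree (.mk n k cs) s

/-- a tableau is saturated if every leaf node contains only literals -/
def Saturated (t : Tab) : Prop :=
  ∀ s, Subtree t s → s.isLeaf → ∀ φ ∈ s.label.Γ, φ.isLiteralB = true

/-- a tableau is open if no node contains both a formula and its negation -/
def OpenT (t : Tab) : Prop :=
  ∀ s, Subtree t s → ∀ φ : Formula, ¬ (φ ∈ s.label.Γ ∧ Formula.neg φ ∈ s.label.Γ)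

/-- `Extends t' t` : the tableau `t'` extends the (partial) tableau `t` -/
inductive Extends : Tab → Tab → Prop where
  | leaf {t : Tab} {n : Node} {cs : Fin 0 → Tab} (h : t.label = n) :
      Extends t (.mk n 0 cs)
  | node {n : Node} {k : ℕ} {cs cs' : Fin k → Tab} (h : ∀ i, Extends (cs' i) (cs i)) :
      Extends (.mk n k cs') (.mk n k cs)

/-- the node is clean: its formula set is clean and the variables of its
assignment do not occur bound in its formulas -/
def NodeClean (n : Node) : Prop :=
  CleanSet n.Γ ∧ ∀ v ∈ n.σ, v ∉ n.Γ.sup Formula.bv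
/-- a finite set of formulas is (simultaneously) satisfiable in an increasing
domain model with a relevant assignment -/
def SatSet (Γ : Finset Formula) : Prop :=
  ∃ (M : Model), M.Increasing ∧ ∃ (w : M.W) (σ : ℕ → M.D),
    M.relevant w σ ∧ ∀ φ ∈ Γ, M.sat w σ φ

/-- the size (number of symbols) of a formula -/
def Formula.size : Formula → ℕ
  | .atom _ args => 1 + args.length
  | .neg φ => φ.size + 1
  | .and φ ψ => φ.size + ψ.size + 1
  | .or φ ψ => φ.size + ψ.size + 1
  | .box φ => φ.size + 1
  | .dia φ => φ.size + 1
  | .ex _ φ => φ.size + 2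
  | .all _ φ => φ.size + 2

/-- `replComp t r φ` is `φ[r/t]`: the result of replacing the component `t` of
`φ` by `r` (descending only through boolean connectives and quantifiers) -/
def replComp (t r : Formula) (φ : Formula) : Formula :=
  if φ = t then r
  else
    match φ with
    | .and φ₁ φ₂ => .and (replComp t r φ₁) (replComp t r φ₂)
    | .or φ₁ φ₂ => .or (replComp t r φ₁) (replComp t r φ₂)
    | .ex x φ₁ => .ex x (replComp t r φ₁)
    | .all x φ₁ => .all x (replComp t r φ₁)
    | φ' => φ'

/-- the existential prefix `∃y1∃y1'∃y2∃y2'…∃yl∃yl'` given by a list of pairs -/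
def exChain (ys : List (ℕ × ℕ)) (φ : Formula) : Formula :=
  ys.foldr (fun p acc => .ex p.1 (.ex p.2 acc)) φ

/-- the disjunction `⋁_{i≤l} ( ◇ψ[yi/y] ∨ ◇ψ[yi'/y] )` -/
def mkWitDisj (y : ℕ) (ψ : Formula) (ys : List (ℕ × ℕ)) : Formula :=
  bigOr (ys.map fun p => .or (.dia (ψ.subst y p.1)) (.dia (ψ.subst y p.2)))

/-!
Each rule is sound in a single model: a conjunction or disjunction is witnessed by its parts,
an `∃` by updating the assignment at a witness, a `∀` by instantiating it at the values of the
variables of `Dom(σ)` (which lie in the local domain since the assignment is relevant), and a `◇`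
by a successor world, at which the assignment stays relevant because domains increase.
Satisfaction depends only on the free variables, so the update for `∃x` is harmless as long as
cleanliness keeps `x` out of the free variables of the other formulas; substituting a variable
that is not bound, and α-renaming, commute with satisfaction. For cleanliness, every new formula
has its free variables among the variables of the formula it replaces and its bound variables
among the bound ones, so all the disjointness conditions are inherited.
-/

open Function

theorem update_eq_update_of_forall_mem_erase {α : Type*} {π π' : ℕ → α} {s : Finset ℕ} {x : ℕ}
    (h : ∀ v ∈ s.erase x, π v = π' v) (d : α) : ∀ v ∈ s, update π x d v = update π' x d v := by
  intro v hv
  rcases eq_or_ne v x with rfl | hne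
  · simp
  · simp only [update_of_ne hne]
    exact h v (Finset.mem_erase.2 ⟨hne, hv⟩)

namespace Model

variable {M : Model}

theorem sat_congr {φ : Formula} {w : M.W} {π π' : ℕ → M.D} (h : ∀ v ∈ φ.fv, π v = π' v) :
    M.sat w π φ ↔ M.sat w π' φ := by
  induction φ generalizing w π π' with
  | atom p args =>
    simp only [sat, List.map_congr_left fun v hv => h v (List.mem_toFinset.2 hv)]
  | neg φ ih => exact not_congr (ih h)
  | and φ ψ ihφ ihψ | or φ ψ ihφ ihψ =>
    simp only [Formula.fv, Finset.mem_union] at h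
    simp only [sat, ihφ fun v hv => h v (.inl hv), ihψ fun v hv => h v (.inr hv)]
  | box φ ih => exact forall₂_congr fun v _ => ih h
  | dia φ ih => exact exists_congr fun v => and_congr_right fun _ => ih h
  | ex x φ ih =>
    exact exists_congr fun d => and_congr_right fun _ =>
      ih (update_eq_update_of_forall_mem_erase h d)
  | all x φ ih => exact forall₂_congr fun d _ => ih (update_eq_update_of_forall_mem_erase h d)

theorem sat_subst {φ : Formula} {w : M.W} {π : ℕ → M.D} {y z : ℕ} (hz : z ∉ φ.bv) :
    M.sat w π (φ.subst y z) ↔ M.sat w (update π y (π z)) φ := by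
  induction φ generalizing w π with
  | atom p args =>
    have : (π ∘ fun v => if v = y then z else v) = update π y (π z) := by
      funext v
      rcases eq_or_ne v y with rfl | hne <;> simp [*]
    simp only [Formula.subst, sat, List.map_map, this]
  | neg φ ih => exact not_congr (ih hz)
  | and φ ψ ihφ ihψ | or φ ψ ihφ ihψ =>
    simp only [Formula.bv, Finset.mem_union, not_or] at hz
    simp only [Formula.subst, sat, ihφ hz.1, ihψ hz.2]
  | box φ ih => exact forall₂_congr fun v _ => ih hz
  | dia φ ih => exact exists_congr fun v => and_congr_right fun _ => ih hz
  | ex x φ ih =>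
    simp only [Formula.bv, Finset.mem_insert, not_or] at hz
    rcases eq_or_ne x y with rfl | hxy
    · simp [Formula.subst, sat]
    · simp only [Formula.subst, if_neg hxy, sat, ih hz.2, update_of_ne hz.1,
        update_comm (Ne.symm hxy)]
  | all x φ ih =>
    simp only [Formula.bv, Finset.mem_insert, not_or] at hz
    rcases eq_or_ne x y with rfl | hxy
    · simp [Formula.subst, sat]
    · simp only [Formula.subst, if_neg hxy, sat, ih hz.2, update_of_ne hz.1,
        update_comm (Ne.symm hxy)]

theorem sat_subst_update {φ : Formula} {w : M.W} {π : ℕ → M.D} {x z : ℕ} {d : M.D}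
    (hzb : z ∉ φ.bv) (hzf : z ∉ φ.fv) :
    M.sat w (update π z d) (φ.subst x z) ↔ M.sat w (update π x d) φ := by
  rw [sat_subst hzb, update_self]
  refine sat_congr fun v hv => ?_
  rcases eq_or_ne v x with rfl | hvx
  · simp
  · rw [update_of_ne hvx, update_of_ne hvx, update_of_ne (ne_of_mem_of_not_mem hv hzf)]

theorem sat_update_iff_of_subst_fresh {φ φ' : Formula} {x x' : ℕ}
    (h : ∀ z, z ∉ φ.bv ∪ φ'.bv → ∀ w π, M.sat w π (φ.subst x z) ↔ M.sat w π (φ'.subst x' z))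
    (w : M.W) (π : ℕ → M.D) (d : M.D) :
    M.sat w (update π x d) φ ↔ M.sat w (update π x' d) φ' := by
  obtain ⟨z, hz⟩ := Infinite.exists_notMem_finset (φ.bv ∪ φ'.bv ∪ (φ.fv ∪ φ'.fv))
  simp only [Finset.mem_union, not_or] at hz
  obtain ⟨⟨hzb, hzb'⟩, hzf, hzf'⟩ := hz
  rw [← sat_subst_update hzb hzf, h z (by simp [hzb, hzb']), sat_subst_update hzb' hzf']

theorem _root_.AlphaEq.sat_iff {φ ψ : Formula} (h : AlphaEq φ ψ) :
    ∀ w π, M.sat w π φ ↔ M.sat w π ψ := by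
  induction h with
  | atom => exact fun _ _ => Iff.rfl
  | neg _ ih => exact fun w π => not_congr (ih w π)
  | and _ _ ih₁ ih₂ | or _ _ ih₁ ih₂ => intro w π; simp only [sat, ih₁ w π, ih₂ w π]
  | box _ ih => exact fun w π => forall₂_congr fun v _ => ih v π
  | dia _ ih => exact fun w π => exists_congr fun v => and_congr_right fun _ => ih v π
  | ex _ ih =>
    exact fun w π => exists_congr fun d => and_congr_right fun _ =>
      sat_update_iff_of_subst_fresh ih w π d
  | all _ ih => exact fun w π => forall₂_congr fun d _ => sat_update_iff_of_subst_fresh ih w π d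

theorem relevant.update {w : M.W} {π : ℕ → M.D} (hπ : M.relevant w π) (x : ℕ) {d : M.D}
    (hd : d ∈ M.dom w) : M.relevant w (update π x d) := by
  intro v
  rcases eq_or_ne v x with rfl | hne
  · simpa using hd
  · simpa [update_of_ne hne] using hπ v

theorem relevant.of_R (hM : M.Increasing) {w v : M.W} {π : ℕ → M.D} (hπ : M.relevant w π)
    (hwv : M.R w v) : M.relevant v π := by
  obtain ⟨-, -, -, -, -, hmono, -⟩ := hM
  exact fun x => hmono w v hwv (hπ x)

theorem sat_subst_of_sat_all {w : M.W} {π : ℕ → M.D} {y z : ℕ} {φ : Formula}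
    (hπ : M.relevant w π) (hall : M.sat w π (.all y φ)) (hz : z ∉ φ.bv) :
    M.sat w π (φ.subst y z) :=
  (sat_subst hz).2 (hall (π z) (hπ z))

end Model

theorem satSet_insert_of_sat_ex {M : Model} (hM : M.Increasing) {w : M.W} {π : ℕ → M.D}
    {Γ : Finset Formula} {x : ℕ} {φ : Formula} (hπ : M.relevant w π)
    (hex : M.sat w π (.ex x φ)) (hΓ : ∀ γ ∈ Γ, M.sat w π γ) (hx : ∀ γ ∈ Γ, x ∉ γ.fv) :
    SatSet (insert φ Γ) := by
  obtain ⟨d, hd, hφ⟩ := hex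
  refine ⟨M, hM, w, update π x d, hπ.update x hd,
    (Finset.forall_mem_insert _ _ _).2 ⟨hφ, fun γ hγ => ?_⟩⟩
  refine (Model.sat_congr fun v hv => ?_).1 (hΓ γ hγ)
  rw [update_of_ne (ne_of_mem_of_not_mem hv (hx γ hγ))]

theorem satSet_union_image_of_sat_all {M : Model} (hM : M.Increasing) {w : M.W}
    {π : ℕ → M.D} {Γ : Finset Formula} {y : ℕ} {φ : Formula} {σ : Finset ℕ} {f : ℕ → Formula}
    (hπ : M.relevant w π) (hall : M.sat w π (.all y φ)) (hΓ : ∀ γ ∈ Γ, M.sat w π γ)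
    (hσ : ∀ z ∈ σ, z ∉ φ.bv) (hf : ∀ z ∈ σ, AlphaEq (f z) (φ.subst y z)) :
    SatSet (Γ ∪ σ.image f) := by
  refine ⟨M, hM, w, π, hπ, fun γ hγ => ?_⟩
  rcases Finset.mem_union.1 hγ with hγ | hγ
  · exact hΓ γ hγ
  · obtain ⟨z, hz, rfl⟩ := Finset.mem_image.1 hγ
    exact ((hf z hz).sat_iff w π).2 (Model.sat_subst_of_sat_all hπ hall (hσ z hz))

theorem cleanSet_iff {Γ : Finset Formula} :
    CleanSet Γ ↔ (∀ φ ∈ Γ, φ.uniqueBinders) ∧ (∀ φ ∈ Γ, ∀ ψ ∈ Γ, Disjoint φ.fv ψ.bv) ∧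
      ∀ φ ∈ Γ, ∀ ψ ∈ Γ, φ ≠ ψ → Disjoint φ.bv ψ.bv := by
  simp only [CleanSet, Finset.disjoint_sup_left, Finset.disjoint_sup_right]
  exact and_congr_right fun _ => and_congr_left fun _ => forall₂_comm

namespace CleanSet

variable {Γ Δ : Finset Formula}

theorem disjoint_fv_bv (hΓ : CleanSet Γ) {φ ψ : Formula} (hφ : φ ∈ Γ) (hψ : ψ ∈ Γ) :
    Disjoint φ.fv ψ.bv :=
  (cleanSet_iff.1 hΓ).2.1 φ hφ ψ hψ

theorem clean_of_mem (hΓ : CleanSet Γ) {φ : Formula} (hφ : φ ∈ Γ) : φ.Clean :=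
  ⟨hΓ.1 φ hφ, hΓ.disjoint_fv_bv hφ hφ⟩

theorem disjoint_bv_sup_bv_erase (hΓ : CleanSet Γ) {A : Formula} (hA : A ∈ Γ) :
    Disjoint A.bv ((Γ.erase A).sup Formula.bv) :=
  Finset.disjoint_sup_right.2 fun γ hγ =>
    hΓ.2.2 A hA γ (Finset.mem_of_mem_erase hγ) (Finset.ne_of_mem_erase hγ).symm

theorem notMem_fv_of_ex_mem (hΓ : CleanSet Γ) {x : ℕ} {φ γ : Formula}
    (hA : Formula.ex x φ ∈ Γ) (hγ : γ ∈ Γ) : x ∉ γ.fv := fun hx =>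
  Finset.disjoint_left.1 (hΓ.disjoint_fv_bv hγ hA) hx (Finset.mem_insert_self x φ.bv)

theorem mono (hΓ : CleanSet Γ) (h : Δ ⊆ Γ) : CleanSet Δ :=
  ⟨fun φ hφ => hΓ.1 φ (h hφ), hΓ.2.1.mono (Finset.sup_mono h) (Finset.sup_mono h),
    fun φ hφ ψ hψ => hΓ.2.2 φ (h hφ) ψ (h hψ)⟩

theorem image (hΓ : CleanSet Γ) {g : Formula → Formula}
    (hub : ∀ φ ∈ Γ, (g φ).uniqueBinders) (hfv : ∀ φ ∈ Γ, (g φ).fv ⊆ φ.fv)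
    (hbv : ∀ φ ∈ Γ, (g φ).bv ⊆ φ.bv) : CleanSet (Γ.image g) := by
  simp only [cleanSet_iff, Finset.forall_mem_image]
  refine ⟨hub, fun φ hφ ψ hψ => (hΓ.disjoint_fv_bv hφ hψ).mono (hfv φ hφ) (hbv ψ hψ),
    fun φ hφ ψ hψ hne => ?_⟩
  exact (hΓ.2.2 φ hφ ψ hψ (ne_of_apply_ne g hne)).mono (hbv φ hφ) (hbv ψ hψ)

theorem union_erase (hΓ : CleanSet Γ) {A : Formula} (hA : A ∈ Γ) (hΔ : CleanSet Δ)
    (hfv : ∀ δ ∈ Δ, δ.fv ⊆ A.fv ∪ A.bv) (hbv : ∀ δ ∈ Δ, δ.bv ⊆ A.bv) :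
    CleanSet (Δ ∪ Γ.erase A) := by
  have hA_disj : ∀ γ ∈ Γ.erase A, Disjoint A.bv γ.bv :=
    fun _ hγ => Finset.disjoint_sup_right.1 (hΓ.disjoint_bv_sup_bv_erase hA) hγ
  obtain ⟨hubΔ, hfbΔ, hbbΔ⟩ := cleanSet_iff.1 hΔ
  obtain ⟨hubΓ, hfbΓ, hbbΓ⟩ := cleanSet_iff.1 hΓ
  simp only [cleanSet_iff, Finset.mem_union]
  refine ⟨fun φ hφ => hφ.elim (hubΔ φ) (fun h => hubΓ φ (Finset.mem_of_mem_erase h)),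
    fun φ hφ ψ hψ => ?_, fun φ hφ ψ hψ hne => ?_⟩
  · rcases hφ with hφ | hφ <;> rcases hψ with hψ | hψ
    · exact hfbΔ φ hφ ψ hψ
    · exact Disjoint.mono_left (hfv φ hφ) <| Finset.disjoint_union_left.2
        ⟨hfbΓ A hA ψ (Finset.mem_of_mem_erase hψ), hA_disj ψ hψ⟩
    · exact (hfbΓ φ (Finset.mem_of_mem_erase hφ) A hA).mono_right (hbv ψ hψ)
    · exact hfbΓ φ (Finset.mem_of_mem_erase hφ) ψ (Finset.mem_of_mem_erase hψ)
  · rcases hφ with hφ | hφ <;> rcases hψ with hψ | hψ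
    · exact hbbΔ φ hφ ψ hψ hne
    · exact (hA_disj ψ hψ).mono_left (hbv φ hφ)
    · exact (hA_disj φ hφ).symm.mono_right (hbv ψ hψ)
    · exact hbbΓ φ (Finset.mem_of_mem_erase hφ) ψ (Finset.mem_of_mem_erase hψ) hne

end CleanSet

theorem cleanSet_singleton {φ : Formula} : CleanSet {φ} ↔ φ.Clean := by
  simp [cleanSet_iff, Formula.Clean]

theorem cleanSet_pair {φ ψ : Formula} (hub : φ.uniqueBinders ∧ ψ.uniqueBinders ∧ Disjoint φ.bv ψ.bv)
    (hfb : Disjoint (φ.fv ∪ ψ.fv) (φ.bv ∪ ψ.bv)) : CleanSet {φ, ψ} := by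
  obtain ⟨hubφ, hubψ, hbv⟩ := hub
  simp only [Finset.disjoint_union_left, Finset.disjoint_union_right] at hfb
  simp only [cleanSet_iff, Finset.forall_mem_insert, Finset.mem_singleton, forall_eq]
  exact ⟨⟨hubφ, hubψ⟩, ⟨⟨hfb.1.1, hfb.2.1⟩, hfb.1.2, hfb.2.2⟩,
    ⟨fun h => absurd rfl h, fun _ => hbv⟩, fun _ => hbv.symm, fun h => absurd rfl h⟩

theorem Formula.Clean.of_ex {x : ℕ} {φ : Formula} (h : (Formula.ex x φ).Clean) : φ.Clean := by
  obtain ⟨⟨hub, hx⟩, hfb⟩ := h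
  refine ⟨hub, Finset.disjoint_left.2 fun v hvf hvb => ?_⟩
  have hvx : v ≠ x := ne_of_mem_of_not_mem hvb hx
  exact Finset.disjoint_left.1 hfb (Finset.mem_erase.2 ⟨hvx, hvf⟩) (Finset.mem_insert_of_mem hvb)

theorem bv_subset_sup_bv_of_all_mem {Γ : Finset Formula} {y : ℕ} {φ : Formula}
    (hA : Formula.all y φ ∈ Γ) : φ.bv ⊆ Γ.sup Formula.bv :=
  fun _ hv => Finset.mem_sup.2 ⟨_, hA, Finset.mem_insert_of_mem hv⟩

namespace Formula

/-- Stripping the outer modality sends the `□`- and `◇`-formulas of a node onto the formulas of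
its `(◇)`-children. -/
def stripModal : Formula → Formula
  | .box φ => φ
  | .dia φ => φ
  | φ => φ

theorem fv_stripModal (φ : Formula) : φ.stripModal.fv = φ.fv := by cases φ <;> rfl

theorem bv_stripModal (φ : Formula) : φ.stripModal.bv = φ.bv := by cases φ <;> rfl

theorem uniqueBinders_stripModal (φ : Formula) :
    φ.stripModal.uniqueBinders ↔ φ.uniqueBinders := by
  cases φ <;> rfl

end Formula

namespace NodeClean

variable {w w' : List ℕ} {Γ Γ' Δ : Finset Formula} {σ : Finset ℕ}

theorem mono (hn : NodeClean ⟨w, Γ, σ⟩) (h : Γ' ⊆ Γ) : NodeClean ⟨w', Γ', σ⟩ :=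
  ⟨hn.1.mono h, fun v hv hvb => hn.2 v hv (Finset.mem_of_subset (Finset.sup_mono h) hvb)⟩

theorem image_stripModal (hn : NodeClean ⟨w, Γ, σ⟩) :
    NodeClean ⟨w', Γ.image Formula.stripModal, σ⟩ := by
  refine ⟨hn.1.image (fun φ hφ => (φ.uniqueBinders_stripModal).2 (hn.1.1 φ hφ))
    (fun φ _ => (φ.fv_stripModal).subset) (fun φ _ => (φ.bv_stripModal).subset), ?_⟩
  simpa only [Finset.sup_image, comp_def, Formula.bv_stripModal] using hn.2

theorem union_erase (hn : NodeClean ⟨w, Γ, σ⟩) {A : Formula} (hA : A ∈ Γ) (hΔ : CleanSet Δ)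
    (hfv : ∀ δ ∈ Δ, δ.fv ⊆ A.fv ∪ A.bv) (hbv : ∀ δ ∈ Δ, δ.bv ⊆ A.bv) :
    NodeClean ⟨w', Δ ∪ Γ.erase A, σ⟩ := by
  have hsup : (Δ ∪ Γ.erase A).sup Formula.bv ⊆ Γ.sup Formula.bv := by
    rw [Finset.sup_union]
    exact sup_le (Finset.sup_le fun δ hδ => (hbv δ hδ).trans (Finset.le_sup hA))
      (Finset.sup_mono (Finset.erase_subset A Γ))
  exact ⟨hn.1.union_erase hA hΔ hfv hbv, fun v hv hvb => hn.2 v hv (hsup hvb)⟩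

end NodeClean

theorem mem_diaBodies {Γ : Finset Formula} {ψ : Formula} :
    ψ ∈ diaBodies Γ ↔ Formula.dia ψ ∈ Γ := by
  simp only [diaBodies, List.mem_filterMap, Finset.mem_toList]
  constructor
  · rintro ⟨φ, hφ, h⟩
    cases φ <;> simp_all
  · exact fun h => ⟨.dia ψ, h, rfl⟩

theorem mem_boxBodies {Γ : Finset Formula} {ψ : Formula} :
    ψ ∈ boxBodies Γ ↔ Formula.box ψ ∈ Γ := by
  simp only [boxBodies, List.mem_toFinset, List.mem_filterMap, Finset.mem_toList]
  constructor
  · rintro ⟨φ, hφ, h⟩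
    cases φ <;> simp_all
  · exact fun h => ⟨.box ψ, h, rfl⟩

theorem Step.nodeClean {n : Node} {cs : List Node} (h : Step n cs) (hn : NodeClean n) :
    ∀ c ∈ cs, NodeClean c := by
  cases h with
  | @and w Γ σ φ ψ hA =>
    simp only [List.mem_singleton, forall_eq]
    rw [← Finset.singleton_union ψ, ← Finset.insert_union]
    obtain ⟨hub, hfb⟩ := hn.1.clean_of_mem hA
    refine hn.union_erase hA (cleanSet_pair hub hfb) ?_ ?_ <;>
      simp +contextual [Formula.fv, Formula.bv, Finset.subset_iff]
  | @orL w Γ σ φ ψ hA | @orR w Γ σ φ ψ hA =>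
    simp only [List.mem_singleton, forall_eq]
    rw [← Finset.singleton_union]
    obtain ⟨hub, hfb⟩ := hn.1.clean_of_mem hA
    refine hn.union_erase hA ((cleanSet_pair hub hfb).mono (by simp)) ?_ ?_ <;>
      simp +contextual [Formula.fv, Formula.bv, Finset.subset_iff]
  | @exis w Γ σ x φ hA =>
    have hA_clean := hn.1.clean_of_mem hA
    have hc : NodeClean ⟨w, {φ} ∪ Γ.erase (.ex x φ), σ⟩ :=
      hn.union_erase hA (cleanSet_singleton.2 hA_clean.of_ex)
        (by simp +contextual [Formula.fv, Formula.bv, Finset.subset_iff, or_iff_not_imp_left])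
        (by simp [Formula.bv, Finset.subset_insert])
    have hx : x ∉ ({φ} ∪ Γ.erase (.ex x φ)).sup Formula.bv := by
      rw [Finset.sup_union, Finset.sup_singleton, Finset.sup_eq_union, Finset.mem_union, not_or]
      exact ⟨hA_clean.1.2, Finset.disjoint_left.1 (hn.1.disjoint_bv_sup_bv_erase hA)
        (Finset.mem_insert_self x φ.bv)⟩
    simp only [List.mem_singleton, forall_eq]
    rw [← Finset.singleton_union]
    exact ⟨hc.1, (Finset.forall_mem_insert _ _ _).2 ⟨hx, hc.2⟩⟩
  | alls f hA hsafe hα hclean hσ =>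
    simpa using ⟨hclean, hσ⟩
  | @diam w Γ σ hmod hne =>
    intro c hc
    obtain ⟨p, hp, rfl⟩ := List.mem_map.1 hc
    refine (hn.image_stripModal (w' := w)).mono (Finset.insert_subset_iff.2 ⟨?_, fun ψ hψ => ?_⟩)
    · exact Finset.mem_image.2 ⟨.dia p.1, mem_diaBodies.1 (List.fst_mem_of_mem_zipIdx hp), rfl⟩
    · exact Finset.mem_image.2 ⟨.box ψ, mem_boxBodies.1 hψ, rfl⟩
  | fin hmod hnd hbox =>
    simpa using hn.mono (Finset.filter_subset _ _)

theorem Step.exists_satSet {n : Node} {cs : List Node} (h : Step n cs) (hn : NodeClean n)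
    (hsat : SatSet n.Γ) : ∃ cs' : List Node, Step n cs' ∧ ∀ c ∈ cs', SatSet c.Γ := by
  obtain ⟨M, hM, w, π, hπ, hΓ⟩ := hsat
  have hΓ_erase : ∀ A, ∀ γ ∈ n.Γ.erase A, M.sat w π γ :=
    fun _ γ hγ => hΓ γ (Finset.mem_of_mem_erase hγ)
  cases h with
  | and hA =>
    obtain ⟨hφ, hψ⟩ := hΓ _ hA
    refine ⟨_, .and hA, ?_⟩
    simp only [List.mem_singleton, forall_eq]
    exact ⟨M, hM, w, π, hπ, by simpa only [Finset.forall_mem_insert] using ⟨hφ, hψ, hΓ_erase _⟩⟩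
  | orL hA | orR hA =>
    rcases hΓ _ hA with hφ | hψ
    · refine ⟨_, .orL hA, ?_⟩
      simp only [List.mem_singleton, forall_eq]
      exact ⟨M, hM, w, π, hπ, (Finset.forall_mem_insert _ _ _).2 ⟨hφ, hΓ_erase _⟩⟩
    · refine ⟨_, .orR hA, ?_⟩
      simp only [List.mem_singleton, forall_eq]
      exact ⟨M, hM, w, π, hπ, (Finset.forall_mem_insert _ _ _).2 ⟨hψ, hΓ_erase _⟩⟩
  | exis hA =>
    refine ⟨_, .exis hA, ?_⟩
    simp only [List.mem_singleton, forall_eq]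
    exact satSet_insert_of_sat_ex hM hπ (hΓ _ hA) (hΓ_erase _)
      fun γ hγ => hn.1.notMem_fv_of_ex_mem hA (Finset.mem_of_mem_erase hγ)
  | alls f hA hsafe hα hclean hσ =>
    refine ⟨_, .alls f hA hsafe hα hclean hσ, ?_⟩
    simp only [List.mem_singleton, forall_eq]
    exact satSet_union_image_of_sat_all hM hπ (hΓ _ hA) (hΓ_erase _)
      (fun z hz hzφ => hn.2 z hz (bv_subset_sup_bv_of_all_mem hA hzφ)) hα
  | diam hmod hne =>
    refine ⟨_, .diam hmod hne, fun c hc => ?_⟩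
    obtain ⟨p, hp, rfl⟩ := List.mem_map.1 hc
    obtain ⟨v, hwv, hv⟩ := hΓ _ (mem_diaBodies.1 (List.fst_mem_of_mem_zipIdx hp))
    exact ⟨M, hM, v, π, hπ.of_R hM hwv,
      (Finset.forall_mem_insert _ _ _).2 ⟨hv, fun ψ hψ => hΓ _ (mem_boxBodies.1 hψ) v hwv⟩⟩
  | fin hmod hnd hbox =>
    refine ⟨_, .fin hmod hnd hbox, ?_⟩
    simp only [List.mem_singleton, forall_eq]
    exact ⟨M, hM, w, π, hπ, fun γ hγ => hΓ γ (Finset.mem_of_mem_filter γ hγ)⟩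

/-- Every rule of the LBF tableau system preserves both
cleanliness and satisfiability over increasing domain models: every rule
application with a clean premise has clean conclusions, and whenever a rule is
applicable to a clean satisfiable premise, some application of a rule produces
only satisfiable conclusion nodes (for the `(∨)` rule this is the choice of at
least one of the two branches).  In particular, for the `(∀)` rule: if
`M,w,π ⊨ ∀yφ ∧ ⋀Γ` with `Γ` Existential-safe and clean rewritings
`φ*[z/y]` (`z ∈ Dom(σ)`), then `Γ ∪ {φ*[z/y] : z ∈ Dom(σ)}` is satisfiable; and
for the `(∃)` rule: if `M,w,π ⊨ ∃xφ ∧ ⋀Γ` with `{∃xφ} ∪ Γ` clean, then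
`Γ ∪ {φ}` is satisfiable. -/
theorem lbf_rules_preserve_clean_and_sat :
    -- every rule application preserves cleanliness
    (∀ (n : Node) (cs : List Node), Step n cs → NodeClean n →
      ∀ c ∈ cs, NodeClean c) ∧
    -- whenever a rule is applicable, some rule application preserves satisfiability
    (∀ (n : Node) (cs : List Node), Step n cs → NodeClean n → SatSet n.Γ →
      ∃ cs' : List Node, Step n cs' ∧ ∀ c ∈ cs', SatSet c.Γ) ∧
    -- the (∀) rule preserves satisfiability
    (∀ (M : Model), M.Increasing → ∀ (w : M.W) (π : ℕ → M.D) (Γ : Finset Formula)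
        (y : ℕ) (φ : Formula) (σ : Finset ℕ) (f : ℕ → Formula),
      M.relevant w π →
      M.sat w π (.all y φ) → (∀ γ ∈ Γ, M.sat w π γ) →
      ExSafe Γ →
      CleanSet (insert (Formula.all y φ) Γ) →
      (∀ z ∈ σ, z ∉ (insert (Formula.all y φ) Γ).sup Formula.bv) →
      (∀ z ∈ σ, AlphaEq (f z) (φ.subst y z)) →
      CleanSet (Γ ∪ σ.image f) →
      SatSet (Γ ∪ σ.image f)) ∧
    -- the (∃) rule preserves satisfiability
    (∀ (M : Model), M.Increasing → ∀ (w : M.W) (π : ℕ → M.D) (Γ : Finset Formula)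
        (x : ℕ) (φ : Formula),
      M.relevant w π →
      M.sat w π (.ex x φ) → (∀ γ ∈ Γ, M.sat w π γ) →
      CleanSet (insert (Formula.ex x φ) Γ) →
      SatSet (insert φ Γ)) := by
  refine ⟨fun _ _ h => h.nodeClean, fun _ _ h => h.exists_satSet, ?_, ?_⟩
  · intro M hM w π Γ y φ σ f hπ hall hΓ _ _ hσ hf _
    exact satSet_union_image_of_sat_all hM hπ hall hΓ
      (fun z hz hzφ => hσ z hz (bv_subset_sup_bv_of_all_mem (Finset.mem_insert_self _ Γ) hzφ)) hf
  · intro M hM w π Γ x φ hπ hex hΓ hclean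
    exact satSet_insert_of_sat_ex hM hπ hex hΓ fun γ hγ =>
      hclean.notMem_fv_of_ex_mem (Finset.mem_insert_self _ Γ) (Finset.mem_insert_of_mem hγ)
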